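/- Suppose S and T are subspaces of B(H₁,H₂) and B(H₁',H₂) with S X = T for an invertible operator X ∈ B(H₁',H₁). If S is hyperreflexive with constant κ_S, then T is hyperreflexive with κ_T ≤ κ_S ‖X‖ ‖X⁻¹‖. -/
import Mathlib
open Pointwise


noncomputable def opdist {H₁ H₂ : Type*} [NormedAddCommGroup H₁] [InnerProductSpace ℂ H₁]
    [NormedAddCommGroup H₂] [InnerProductSpace ℂ H₂]
    (T : H₁ →L[ℂ] H₂) (S : Submodule ℂ (H₁ →L[ℂ] H₂)) : ℝ :=
  Metric.infDist T (S : Set (H₁ →L[ℂ] H₂))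

noncomputable def beta {H₁ H₂ : Type*} [NormedAddCommGroup H₁] [InnerProductSpace ℂ H₁]
    [NormedAddCommGroup H₂] [InnerProductSpace ℂ H₂]
    (S : Submodule ℂ (H₁ →L[ℂ] H₂)) (T : H₁ →L[ℂ] H₂) : ℝ :=
  ⨆ x : {x : H₁ // ‖x‖ = 1},
    Metric.infDist (T x.1)
      (closure ((fun A : H₁ →L[ℂ] H₂ => A x.1) '' (S : Set (H₁ →L[ℂ] H₂))))

/-- Right multiplication `A ↦ A X` by (a continuous linear equivalence) `X`. -/
def rightCompL {H₁ H₁' H₂ : Type*}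
    [NormedAddCommGroup H₁] [InnerProductSpace ℂ H₁]
    [NormedAddCommGroup H₁'] [InnerProductSpace ℂ H₁']
    [NormedAddCommGroup H₂] [InnerProductSpace ℂ H₂]
    (X : H₁' ≃L[ℂ] H₁) : (H₁ →L[ℂ] H₂) →ₗ[ℂ] (H₁' →L[ℂ] H₂) where
  toFun A := A.comp (X : H₁' →L[ℂ] H₁)
  map_add' A B := by ext x; simp
  map_smul' c A := by ext x; simp

section aux

variable {H₁ H₁' H₂ : Type*}
    [NormedAddCommGroup H₁] [InnerProductSpace ℂ H₁]
    [NormedAddCommGroup H₁'] [InnerProductSpace ℂ H₁']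
    [NormedAddCommGroup H₂] [InnerProductSpace ℂ H₂]

lemma rightCompL_map_map (X : H₁' ≃L[ℂ] H₁) (S : Submodule ℂ (H₁ →L[ℂ] H₂)) :
    (S.map (rightCompL X)).map (rightCompL X.symm) = S := by
  rw [← Submodule.map_comp]
  have : (rightCompL X.symm).comp (rightCompL (H₂ := H₂) X) = LinearMap.id := by
    apply LinearMap.ext; intro A; ext x; simp [rightCompL]
  rw [this, Submodule.map_id]

/-- The per-vector distance family is bounded above by `‖W‖`. -/
lemma beta_term_bddAbove (S : Submodule ℂ (H₁ →L[ℂ] H₂)) (W : H₁ →L[ℂ] H₂) :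
    BddAbove (Set.range fun x : {x : H₁ // ‖x‖ = 1} =>
      Metric.infDist (W x.1)
        (closure ((fun A : H₁ →L[ℂ] H₂ => A x.1) '' (S : Set (H₁ →L[ℂ] H₂))))) := by
  refine ⟨‖W‖, ?_⟩
  rintro _ ⟨x, rfl⟩
  have h0 : (0 : H₂) ∈ closure ((fun A : H₁ →L[ℂ] H₂ => A x.1) '' (S : Set (H₁ →L[ℂ] H₂))) := by
    apply subset_closure
    exact ⟨0, S.zero_mem, by simp⟩
  calc Metric.infDist (W x.1) _ ≤ dist (W x.1) 0 := Metric.infDist_le_dist_of_mem h0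
    _ = ‖W x.1‖ := by simp
    _ ≤ ‖W‖ * ‖x.1‖ := W.le_opNorm x.1
    _ = ‖W‖ := by rw [x.2, mul_one]

lemma beta_term_le (S : Submodule ℂ (H₁ →L[ℂ] H₂)) (W : H₁ →L[ℂ] H₂)
    (x : {x : H₁ // ‖x‖ = 1}) :
    Metric.infDist (W x.1)
        (closure ((fun A : H₁ →L[ℂ] H₂ => A x.1) '' (S : Set (H₁ →L[ℂ] H₂)))) ≤ beta S W :=
  le_ciSup (beta_term_bddAbove S W) x

lemma beta_nonneg (S : Submodule ℂ (H₁ →L[ℂ] H₂)) (W : H₁ →L[ℂ] H₂) :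
    0 ≤ beta S W :=
  Real.iSup_nonneg fun _ => Metric.infDist_nonneg

/-- Key comparison: `β(S·X, W) ≤ ‖X‖ · β(S, W∘X⁻¹)`. -/
lemma beta_comp (X : H₁' ≃L[ℂ] H₁) (S : Submodule ℂ (H₁ →L[ℂ] H₂)) (W : H₁' →L[ℂ] H₂) :
    beta (S.map (rightCompL X)) W ≤
      ‖(X : H₁' →L[ℂ] H₁)‖ * beta S (W.comp (X.symm : H₁ →L[ℂ] H₁')) := by
  set V : H₁ →L[ℂ] H₂ := W.comp (X.symm : H₁ →L[ℂ] H₁') with hV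
  refine Real.iSup_le (fun x => ?_)
    (mul_nonneg (norm_nonneg _) (beta_nonneg S V))
  -- x : unit vector of H₁'
  obtain ⟨x, hx⟩ := x
  set u : H₁ := X x with hu
  have hu0 : u ≠ 0 := by
    simp only [hu]
    intro h
    have : x = 0 := by
      have := congrArg X.symm h
      simpa using this
    rw [this] at hx; simp at hx
  set r : ℝ := ‖u‖ with hr
  have hr0 : 0 < r := norm_pos_iff.mpr hu0
  have hrc : ((r : ℂ)) ≠ 0 := by
    simpa using hr0.ne'
  set y : H₁ := (r : ℂ)⁻¹ • u with hy
  have hy1 : ‖y‖ = 1 := by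
    rw [hy, norm_smul]
    simp only [norm_inv, Complex.norm_real, Real.norm_eq_abs, abs_of_pos hr0]
    rw [inv_mul_cancel₀ hr0.ne']
  have huy : u = (r : ℂ) • y := by
    rw [hy, smul_smul, mul_inv_cancel₀ hrc, one_smul]
  -- the evaluation image of T at x equals the evaluation image of S at u
  have himg : ((fun A : H₁' →L[ℂ] H₂ => A x) '' ((S.map (rightCompL X)) : Set (H₁' →L[ℂ] H₂)))
      = (fun A : H₁ →L[ℂ] H₂ => A u) '' (S : Set (H₁ →L[ℂ] H₂)) := by
    rw [Submodule.map_coe, Set.image_image]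
    rfl
  have himg2 : (fun A : H₁ →L[ℂ] H₂ => A u) '' (S : Set (H₁ →L[ℂ] H₂))
      = (r : ℂ) • ((fun A : H₁ →L[ℂ] H₂ => A y) '' (S : Set (H₁ →L[ℂ] H₂))) := by
    rw [← Set.image_smul, Set.image_image]
    apply Set.image_congr
    intro A _
    rw [huy, map_smul]
  have hWx : W x = (r : ℂ) • V y := by
    have : V y = (r : ℂ)⁻¹ • W x := by
      simp only [hV, ContinuousLinearMap.comp_apply, hy]
      rw [map_smul, map_smul]
      congr 1
      simp [hu]
    rw [this, smul_smul, mul_inv_cancel₀ hrc, one_smul]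
  calc Metric.infDist (W x)
        (closure ((fun A : H₁' →L[ℂ] H₂ => A x) '' ((S.map (rightCompL X)) : Set (H₁' →L[ℂ] H₂))))
      = Metric.infDist ((r : ℂ) • V y)
        ((r : ℂ) • closure ((fun A : H₁ →L[ℂ] H₂ => A y) '' (S : Set (H₁ →L[ℂ] H₂)))) := by
        rw [himg, himg2, hWx, closure_smul₀]
    _ = r * Metric.infDist (V y)
        (closure ((fun A : H₁ →L[ℂ] H₂ => A y) '' (S : Set (H₁ →L[ℂ] H₂)))) := by
        rw [infDist_smul₀ hrc]
        simp only [Complex.norm_real, Real.norm_eq_abs, abs_of_pos hr0]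
    _ ≤ r * beta S V := by
        exact mul_le_mul_of_nonneg_left (beta_term_le S V ⟨y, hy1⟩) hr0.le
    _ ≤ ‖(X : H₁' →L[ℂ] H₁)‖ * beta S V := by
        apply mul_le_mul_of_nonneg_right _ (beta_nonneg S V)
        calc r = ‖X x‖ := rfl
          _ ≤ ‖(X : H₁' →L[ℂ] H₁)‖ * ‖x‖ := (X : H₁' →L[ℂ] H₁).le_opNorm x
          _ = ‖(X : H₁' →L[ℂ] H₁)‖ := by rw [hx, mul_one]

lemma opdist_comp (X : H₁' ≃L[ℂ] H₁) (S : Submodule ℂ (H₁ →L[ℂ] H₂)) (W : H₁' →L[ℂ] H₂) :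
    opdist W (S.map (rightCompL X)) ≤
      ‖(X : H₁' →L[ℂ] H₁)‖ * opdist (W.comp (X.symm : H₁ →L[ℂ] H₁')) S := by
  set V : H₁ →L[ℂ] H₂ := W.comp (X.symm : H₁ →L[ℂ] H₁') with hV
  have key : ∀ ε > (0 : ℝ), opdist W (S.map (rightCompL X)) - ε ≤
      ‖(X : H₁' →L[ℂ] H₁)‖ * opdist V S := by
    intro ε hε
    set ε' : ℝ := ε / (‖(X : H₁' →L[ℂ] H₁)‖ + 1) with hε'
    have hXpos : (0 : ℝ) < ‖(X : H₁' →L[ℂ] H₁)‖ + 1 :=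
      lt_of_lt_of_le one_pos (by linarith [norm_nonneg (X : H₁' →L[ℂ] H₁)])
    have hε'pos : 0 < ε' := div_pos hε hXpos
    have hne : (S : Set (H₁ →L[ℂ] H₂)).Nonempty := ⟨0, S.zero_mem⟩
    obtain ⟨A, hA, hAd⟩ := (Metric.infDist_lt_iff hne).mp
      (show Metric.infDist V (S : Set (H₁ →L[ℂ] H₂)) < opdist V S + ε' by
        rw [opdist]; linarith)
    have hWA : W - (rightCompL X) A = (V - A).comp (X : H₁' →L[ℂ] H₁) := by
      ext z
      simp [hV, rightCompL]
    have h1 : opdist W (S.map (rightCompL X)) ≤ dist W ((rightCompL X) A) :=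
      Metric.infDist_le_dist_of_mem ⟨A, hA, rfl⟩
    have h2 : dist W ((rightCompL X) A) ≤ ‖V - A‖ * ‖(X : H₁' →L[ℂ] H₁)‖ := by
      rw [dist_eq_norm, hWA]
      exact ContinuousLinearMap.opNorm_comp_le _ _
    have h3 : ‖V - A‖ < opdist V S + ε' := by rw [← dist_eq_norm]; exact hAd
    have h4 : ‖V - A‖ * ‖(X : H₁' →L[ℂ] H₁)‖ ≤
        (opdist V S + ε') * ‖(X : H₁' →L[ℂ] H₁)‖ :=
      mul_le_mul_of_nonneg_right h3.le (norm_nonneg _)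
    have h5 : ε' * ‖(X : H₁' →L[ℂ] H₁)‖ ≤ ε := by
      rw [hε']
      rw [div_mul_eq_mul_div, div_le_iff₀ hXpos]
      have := norm_nonneg (X : H₁' →L[ℂ] H₁)
      nlinarith
    calc opdist W (S.map (rightCompL X)) - ε ≤ dist W ((rightCompL X) A) - ε := by linarith
      _ ≤ (opdist V S + ε') * ‖(X : H₁' →L[ℂ] H₁)‖ - ε := by linarith
      _ = ‖(X : H₁' →L[ℂ] H₁)‖ * opdist V S + (ε' * ‖(X : H₁' →L[ℂ] H₁)‖ - ε) := by ring
      _ ≤ ‖(X : H₁' →L[ℂ] H₁)‖ * opdist V S := by linarith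
  refine le_of_forall_sub_le key

end aux

/-- If `S X = T` for an invertible operator `X` and `S` is hyperreflexive with
constant `C`, then `T` is hyperreflexive with constant `C ‖X‖ ‖X⁻¹‖`. -/
theorem hyperreflexive_of_mul_invertible {H₁ H₁' H₂ : Type*}
    [NormedAddCommGroup H₁] [InnerProductSpace ℂ H₁] [CompleteSpace H₁]
    [NormedAddCommGroup H₁'] [InnerProductSpace ℂ H₁'] [CompleteSpace H₁']
    [NormedAddCommGroup H₂] [InnerProductSpace ℂ H₂] [CompleteSpace H₂]
    (S : Submodule ℂ (H₁ →L[ℂ] H₂)) (T : Submodule ℂ (H₁' →L[ℂ] H₂))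
    (X : H₁' ≃L[ℂ] H₁) (hST : T = S.map (rightCompL X))
    (C : ℝ) (hC : ∀ W : H₁ →L[ℂ] H₂, opdist W S ≤ C * beta S W) :
    ∀ W : H₁' →L[ℂ] H₂,
      opdist W T ≤ (C * ‖(X : H₁' →L[ℂ] H₁)‖ * ‖(X.symm : H₁ →L[ℂ] H₁')‖) *
        beta T W := by
  intro W
  set V : H₁ →L[ℂ] H₂ := W.comp (X.symm : H₁ →L[ℂ] H₁') with hV
  have h1 : opdist W T ≤ ‖(X : H₁' →L[ℂ] H₁)‖ * opdist V S := by
    rw [hST]; exact opdist_comp X S W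
  have h2 : opdist V S ≤ C * beta S V := hC V
  have hVX : V.comp (X : H₁' →L[ℂ] H₁) = W := by
    ext z; simp [hV]
  have h3 : beta S V ≤ ‖(X.symm : H₁ →L[ℂ] H₁')‖ * beta T W := by
    have hTS : T.map (rightCompL X.symm) = S := by rw [hST, rightCompL_map_map]
    have hcoe : ((X.symm.symm : H₁' ≃L[ℂ] H₁) : H₁' →L[ℂ] H₁) = (X : H₁' →L[ℂ] H₁) := by
      rw [ContinuousLinearEquiv.symm_symm]
    have hk := beta_comp X.symm T V
    rw [hTS, hcoe, hVX] at hk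
    exact hk
  have hX0 : (0 : ℝ) ≤ ‖(X : H₁' →L[ℂ] H₁)‖ := norm_nonneg _
  have hXs0 : (0 : ℝ) ≤ ‖(X.symm : H₁ →L[ℂ] H₁')‖ := norm_nonneg _
  have hbT : 0 ≤ beta T W := beta_nonneg T W
  have hbS : 0 ≤ beta S V := beta_nonneg S V
  have hod : 0 ≤ opdist V S := Metric.infDist_nonneg
  rcases le_or_gt 0 C with hC0 | hC0
  · calc opdist W T ≤ ‖(X : H₁' →L[ℂ] H₁)‖ * opdist V S := h1
      _ ≤ ‖(X : H₁' →L[ℂ] H₁)‖ * (C * beta S V) :=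
        mul_le_mul_of_nonneg_left h2 hX0
      _ ≤ ‖(X : H₁' →L[ℂ] H₁)‖ * (C * (‖(X.symm : H₁ →L[ℂ] H₁')‖ * beta T W)) := by
        apply mul_le_mul_of_nonneg_left _ hX0
        exact mul_le_mul_of_nonneg_left h3 hC0
      _ = (C * ‖(X : H₁' →L[ℂ] H₁)‖ * ‖(X.symm : H₁ →L[ℂ] H₁')‖) * beta T W := by ring
  · -- C < 0: everything degenerates
    have hCb : C * beta S V ≤ 0 := mul_nonpos_of_nonpos_of_nonneg hC0.le hbS
    have hodV : opdist V S = 0 := le_antisymm (h2.trans hCb) hod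
    have hbSV : beta S V = 0 := by
      by_contra h
      have : 0 < beta S V := lt_of_le_of_ne hbS (Ne.symm h)
      nlinarith
    have hbTW : beta T W = 0 := by
      have := beta_comp X S W
      rw [← hST, ← hV, hbSV, mul_zero] at this
      exact le_antisymm this hbT
    have hodW : opdist W T = 0 := by
      have := h1
      rw [hodV, mul_zero] at this
      exact le_antisymm this Metric.infDist_nonneg
    rw [hodW, hbTW, mul_zero]
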